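/- arXiv:2508.02327 — 2 statements merged into one kernel-verified Lean document; each statement's English description precedes it below -/
import Mathlib

section
/- Let 0 < a < b and y > 1. Then (a/b)^y ≤ B(b,y)/B(a,y) ≤ ((b+y)/(a+y))^(1-y) · (a/b). -/
open Real MeasureTheory intervalIntegral

noncomputable def B (x y : ℝ) : ℝ := ∫ t in (0:ℝ)..1, t ^ (x - 1) * (1 - t) ^ (y - 1)

/-!
Both bounds are monotonicity statements: `s ↦ s ^ y * B s y` increases and
`s ↦ s * (s + y) ^ (y - 1) * B s y` decreases on `(0, ∞)`. With `I = ∂B/∂s (s, y)`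
(`betaLog s y`), the two derivatives have the signs of `y B + s I` and
`y (s + 1) B + s (s + y) I`. Integrating `t ^ s * log t * (1 - t) ^ (y - 1)` by parts gives
`B(s, y) + s I = (y - 1) J` with `J = ∫ t ^ s (1 - t) ^ (y - 2) log t`
(`betaLog (s + 1) (y - 1)`), and `1 - 1/t ≤ log t ≤ t - 1` gives
`-B(s, y) ≤ J ≤ -B(s + 1, y)`. Together with `s B(s, y) = (s + y) B(s + 1, y)` this settles
both signs.
-/

open Set

lemma ofReal_beta_integrand {x y t : ℝ} (ht : t ∈ Icc (0:ℝ) 1) :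
    ((t ^ (x - 1) * (1 - t) ^ (y - 1) : ℝ) : ℂ) =
      (t : ℂ) ^ ((x : ℂ) - 1) * (1 - (t : ℂ)) ^ ((y : ℂ) - 1) := by
  push_cast [Complex.ofReal_cpow ht.1, Complex.ofReal_cpow (sub_nonneg.2 ht.2)]
  rfl

lemma intervalIntegrable_beta_integrand {x y : ℝ} (hx : 0 < x) (hy : 0 < y) :
    IntervalIntegrable (fun t : ℝ => t ^ (x - 1) * (1 - t) ^ (y - 1)) volume 0 1 := by
  refine (Complex.betaIntegral_convergent (u := x) (v := y) hx hy).norm.congr fun t ht => ?_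
  rw [uIoc_of_le zero_le_one] at ht
  rw [← ofReal_beta_integrand (Ioc_subset_Icc_self ht), Complex.norm_real, norm_of_nonneg]
  exact mul_nonneg (rpow_nonneg ht.1.le _) (rpow_nonneg (sub_nonneg.2 ht.2) _)

lemma B_eq_Gamma {x y : ℝ} (hx : 0 < x) (hy : 0 < y) :
    B x y = Gamma x * Gamma y / Gamma (x + y) := by
  rw [← ProbabilityTheory.beta, ProbabilityTheory.beta_eq_betaIntegralReal x y hx hy,
    Complex.betaIntegral, B, ← Complex.ofReal_re (∫ t in (0:ℝ)..1, _),
    ← intervalIntegral.integral_ofReal]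
  congr 1
  refine integral_congr fun t ht => ?_
  rw [uIcc_of_le zero_le_one] at ht
  exact ofReal_beta_integrand ht

lemma B_pos {x y : ℝ} (hx : 0 < x) (hy : 0 < y) : 0 < B x y := by
  rw [B_eq_Gamma hx hy]
  exact ProbabilityTheory.beta_pos hx hy

lemma mul_B_eq_mul_B_add_one {x y : ℝ} (hx : 0 < x) (hy : 0 < y) :
    x * B x y = (x + y) * B (x + 1) y := by
  rw [B_eq_Gamma hx hy, B_eq_Gamma (by linarith) hy, add_right_comm, Gamma_add_one hx.ne',
    Gamma_add_one (by positivity)]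
  field_simp [(Gamma_pos_of_pos (add_pos hx hy)).ne']

noncomputable def betaLog (x y : ℝ) : ℝ :=
  ∫ t in (0:ℝ)..1, t ^ (x - 1) * (1 - t) ^ (y - 1) * log t

lemma neg_log_le_rpow_neg_div {t ε : ℝ} (ht : 0 < t) (hε : 0 < ε) :
    -log t ≤ t ^ (-ε) / ε := by
  simpa [log_inv, inv_rpow ht.le, rpow_neg ht.le] using log_le_rpow_div (inv_nonneg.2 ht.le) hε

lemma intervalIntegrable_beta_integrand_mul_log {x y : ℝ} (hx : 0 < x) (hy : 0 < y) :
    IntervalIntegrable (fun t : ℝ => t ^ (x - 1) * (1 - t) ^ (y - 1) * log t) volume 0 1 := by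
  refine ((intervalIntegrable_beta_integrand (half_pos hx) hy).const_mul (x / 2)⁻¹).mono_fun
    (by fun_prop) ?_
  rw [Filter.EventuallyLE, ae_restrict_iff' measurableSet_uIoc]
  refine Filter.Eventually.of_forall fun t ht => ?_
  rw [uIoc_of_le zero_le_one] at ht
  obtain ⟨ht₀, ht₁⟩ := ht
  have hlog : log t ≤ 0 := log_nonpos ht₀.le ht₁
  replace ht₁ : 0 ≤ 1 - t := sub_nonneg.2 ht₁
  rw [norm_mul, norm_of_nonneg (by positivity), norm_of_nonpos hlog,
    norm_of_nonneg (by positivity)]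
  calc t ^ (x - 1) * (1 - t) ^ (y - 1) * -log t
      ≤ t ^ (x - 1) * (1 - t) ^ (y - 1) * (t ^ (-(x / 2)) / (x / 2)) :=
        mul_le_mul_of_nonneg_left (neg_log_le_rpow_neg_div ht₀ (half_pos hx)) (by positivity)
    _ = (x / 2)⁻¹ * (t ^ (x / 2 - 1) * (1 - t) ^ (y - 1)) := by
        rw [show x - 1 = x / 2 - 1 + x / 2 by ring, rpow_add ht₀, rpow_neg ht₀.le]
        field_simp [(rpow_pos_of_pos ht₀ (x / 2)).ne']

lemma hasDerivAt_B {x y : ℝ} (hx : 0 < x) (hy : 0 < y) :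
    HasDerivAt (fun x => B x y) (betaLog x y) x := by
  have hball : Metric.ball x (x / 2) ⊆ Ioi (x / 2) := fun u hu => by
    rw [Real.ball_eq_Ioo] at hu; exact hu.1.trans_le' (by linarith)
  refine (hasDerivAt_integral_of_dominated_loc_of_deriv_le
    (F' := fun u t => t ^ (u - 1) * (1 - t) ^ (y - 1) * log t)
    (bound := fun t => ‖t ^ (x / 2 - 1) * (1 - t) ^ (y - 1) * log t‖)
    (Metric.ball_mem_nhds x (half_pos hx)) (Filter.Eventually.of_forall fun u => by fun_prop)
    (intervalIntegrable_beta_integrand hx hy) (by fun_prop) ?_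
    (intervalIntegrable_beta_integrand_mul_log (half_pos hx) hy).norm ?_).2
  · refine Filter.Eventually.of_forall fun t ht u hu => ?_
    rw [uIoc_of_le zero_le_one] at ht
    simp only [norm_mul]
    gcongr
    rw [norm_of_nonneg (rpow_nonneg ht.1.le _), norm_of_nonneg (rpow_nonneg ht.1.le _)]
    exact rpow_le_rpow_of_exponent_ge ht.1 ht.2 (sub_le_sub_right (hball hu).le 1)
  · refine Filter.Eventually.of_forall fun t ht u _ => ?_
    rw [uIoc_of_le zero_le_one] at ht
    have hd := (((hasDerivAt_id u).sub_const 1).const_rpow ht.1).mul_const ((1 - t) ^ (y - 1))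
    simp only [id] at hd
    exact hd.congr_deriv (by ring)

lemma continuousOn_rpow_mul_log {x : ℝ} (hx : 0 < x) :
    ContinuousOn (fun t : ℝ => t ^ x * log t) (Ici 0) := by
  refine ((continuous_rpow_const hx.le).mul_log.const_smul x⁻¹).continuousOn.congr fun t ht => ?_
  rcases (mem_Ici.1 ht).eq_or_lt with rfl | ht
  · simp [zero_rpow hx.ne']
  · simp only [Pi.smul_apply, smul_eq_mul, log_rpow ht]
    field_simp

lemma B_add_mul_betaLog {x y : ℝ} (hx : 0 < x) (hy : 1 < y) :
    B x y + x * betaLog x y = (y - 1) * betaLog (x + 1) (y - 1) := by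
  have hy₀ : 0 < y - 1 := sub_pos.2 hy
  have hderiv : ∀ t ∈ Ioo (0:ℝ) 1, HasDerivAt (fun t => t ^ x * log t * (1 - t) ^ (y - 1))
      (x * (t ^ (x - 1) * (1 - t) ^ (y - 1) * log t) + t ^ (x - 1) * (1 - t) ^ (y - 1)
        - (y - 1) * (t ^ (x + 1 - 1) * (1 - t) ^ (y - 1 - 1) * log t)) t := by
    intro t ht
    have hd := ((hasDerivAt_rpow_const (p := x) (Or.inl ht.1.ne')).mul
      (hasDerivAt_log ht.1.ne')).mul (((hasDerivAt_id t).const_sub 1).rpow_const (p := y - 1)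
        (Or.inl (sub_pos.2 ht.2).ne'))
    simp only [Pi.mul_apply, id] at hd
    refine hd.congr_deriv ?_
    rw [add_sub_cancel_right, rpow_sub_one ht.1.ne']
    field_simp
    ring
  have hcont : ContinuousOn (fun t => t ^ x * log t * (1 - t) ^ (y - 1)) (Icc 0 1) :=
    ((continuousOn_rpow_mul_log hx).mono Icc_subset_Ici_self).mul
      (continuous_rpow_const hy₀.le |>.comp (continuous_const.sub continuous_id)).continuousOn
  have hA := (intervalIntegrable_beta_integrand_mul_log hx (by linarith : 0 < y)).const_mul x
  have hB := intervalIntegrable_beta_integrand hx (by linarith : 0 < y)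
  have hC := (intervalIntegrable_beta_integrand_mul_log (by linarith : 0 < x + 1) hy₀).const_mul
    (y - 1)
  have hftc := integral_eq_sub_of_hasDerivAt_of_le zero_le_one hcont hderiv ((hA.add hB).sub hC)
  rw [intervalIntegral.integral_sub (hA.add hB) hC, intervalIntegral.integral_add hA hB,
    intervalIntegral.integral_const_mul, intervalIntegral.integral_const_mul] at hftc
  simp only [log_one, log_zero, mul_zero, zero_mul, sub_zero] at hftc
  rw [B, betaLog, betaLog]
  linarith

lemma neg_B_le_betaLog_add_one {x y : ℝ} (hx : 0 < x) (hy : 0 < y) :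
    -B x (y + 1) ≤ betaLog (x + 1) y := by
  rw [B, ← intervalIntegral.integral_neg]
  refine integral_mono_on_of_le_Ioo zero_le_one
    (intervalIntegrable_beta_integrand hx (by linarith)).neg
    (intervalIntegrable_beta_integrand_mul_log (by linarith) hy) fun t ⟨ht₀, ht₁⟩ => ?_
  replace ht₁ : 0 < 1 - t := sub_pos.2 ht₁
  have hP : 0 ≤ t ^ x * (1 - t) ^ (y - 1) := by positivity
  calc -(t ^ (x - 1) * (1 - t) ^ (y + 1 - 1)) = t ^ x * (1 - t) ^ (y - 1) * (1 - t⁻¹) := by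
        rw [add_sub_cancel_right, rpow_sub_one ht₀.ne', rpow_sub_one ht₁.ne']
        field_simp
        ring
    _ ≤ t ^ x * (1 - t) ^ (y - 1) * log t :=
        mul_le_mul_of_nonneg_left (one_sub_inv_le_log_of_pos ht₀) hP
    _ = t ^ (x + 1 - 1) * (1 - t) ^ (y - 1) * log t := by rw [add_sub_cancel_right]

lemma betaLog_add_one_le_neg_B {x y : ℝ} (hx : 0 < x) (hy : 0 < y) :
    betaLog (x + 1) y ≤ -B (x + 1) (y + 1) := by
  rw [B, ← intervalIntegral.integral_neg]
  refine integral_mono_on_of_le_Ioo zero_le_one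
    (intervalIntegrable_beta_integrand_mul_log (by linarith) hy)
    (intervalIntegrable_beta_integrand (by linarith) (by linarith)).neg
    fun t ⟨ht₀, ht₁⟩ => ?_
  replace ht₁ : 0 < 1 - t := sub_pos.2 ht₁
  have hP : 0 ≤ t ^ x * (1 - t) ^ (y - 1) := by positivity
  calc t ^ (x + 1 - 1) * (1 - t) ^ (y - 1) * log t
      = t ^ x * (1 - t) ^ (y - 1) * log t := by rw [add_sub_cancel_right]
    _ ≤ t ^ x * (1 - t) ^ (y - 1) * (t - 1) :=
        mul_le_mul_of_nonneg_left (log_le_sub_one_of_pos ht₀) hP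
    _ = -(t ^ (x + 1 - 1) * (1 - t) ^ (y + 1 - 1)) := by
        rw [add_sub_cancel_right, add_sub_cancel_right, rpow_sub_one ht₁.ne']
        field_simp
        ring

lemma hasDerivAt_rpow_mul_B {s y : ℝ} (hs : 0 < s) (hy : 0 < y) :
    HasDerivAt (fun s => s ^ y * B s y) (s ^ (y - 1) * (y * B s y + s * betaLog s y)) s := by
  refine ((hasDerivAt_rpow_const (Or.inl hs.ne')).mul (hasDerivAt_B hs hy)).congr_deriv ?_
  rw [rpow_sub_one hs.ne']
  field_simp

lemma monotoneOn_rpow_mul_B {y : ℝ} (hy : 1 < y) :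
    MonotoneOn (fun s => s ^ y * B s y) (Ioi 0) := by
  have hderiv s (hs : s ∈ Ioi (0:ℝ)) := hasDerivAt_rpow_mul_B hs (by linarith : 0 < y)
  refine monotoneOn_of_hasDerivWithinAt_nonneg (convex_Ioi 0)
    (fun s hs => (hderiv s hs).continuousAt.continuousWithinAt)
    (fun s hs => (hderiv s (interior_subset hs)).hasDerivWithinAt) fun s hs => ?_
  rw [interior_Ioi] at hs
  have hid := B_add_mul_betaLog hs hy
  have hlow := neg_B_le_betaLog_add_one hs (sub_pos.2 hy)
  rw [sub_add_cancel] at hlow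
  refine mul_nonneg (rpow_nonneg (le_of_lt hs) _) ?_
  nlinarith

lemma hasDerivAt_mul_rpow_mul_B {s y : ℝ} (hs : 0 < s) (hy : 0 < y) :
    HasDerivAt (fun s => s * (s + y) ^ (y - 1) * B s y)
      ((s + y) ^ (y - 1) * (y * (s + 1) * B s y + s * (s + y) * betaLog s y) / (s + y)) s := by
  have hsy : 0 < s + y := add_pos hs hy
  refine (((hasDerivAt_id s).mul (((hasDerivAt_id s).add_const y).rpow_const
    (Or.inl hsy.ne'))).mul (hasDerivAt_B hs hy)).congr_deriv ?_
  simp only [Pi.mul_apply, id]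
  rw [rpow_sub_one hsy.ne' (y - 1)]
  field_simp
  ring

lemma antitoneOn_mul_rpow_mul_B {y : ℝ} (hy : 1 < y) :
    AntitoneOn (fun s => s * (s + y) ^ (y - 1) * B s y) (Ioi 0) := by
  have hderiv s (hs : s ∈ Ioi (0:ℝ)) := hasDerivAt_mul_rpow_mul_B hs (by linarith : 0 < y)
  refine antitoneOn_of_hasDerivWithinAt_nonpos (convex_Ioi 0)
    (fun s hs => (hderiv s hs).continuousAt.continuousWithinAt)
    (fun s hs => (hderiv s (interior_subset hs)).hasDerivWithinAt) fun s hs => ?_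
  rw [interior_Ioi] at hs
  have hs : 0 < s := hs
  have hid := B_add_mul_betaLog hs hy
  have hrec := mul_B_eq_mul_B_add_one hs (by linarith : 0 < y)
  have hup := betaLog_add_one_le_neg_B hs (sub_pos.2 hy)
  rw [sub_add_cancel] at hup
  refine div_nonpos_of_nonpos_of_nonneg (mul_nonpos_of_nonneg_of_nonpos
    (rpow_nonneg (by linarith) _) ?_) (by linarith)
  nlinarith [mul_le_mul_of_nonneg_left hup (by nlinarith : 0 ≤ (y - 1) * (s + y))]

theorem stmt2 (a b y : ℝ) (ha : 0 < a) (hab : a < b) (hy : 1 < y) :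
    (a / b) ^ y ≤ B b y / B a y ∧
      B b y / B a y ≤ ((b + y) / (a + y)) ^ (1 - y) * (a / b) := by
  have hb : 0 < b := ha.trans hab
  have hBa : 0 < B a y := B_pos ha (by linarith)
  constructor
  · have h := monotoneOn_rpow_mul_B hy ha hb hab.le
    rw [div_rpow ha.le hb.le, div_le_div_iff₀ (rpow_pos_of_pos hb y) hBa]
    linarith
  · have h := antitoneOn_mul_rpow_mul_B hy ha hb hab.le
    have hpow : ((b + y) / (a + y)) ^ (1 - y) = (a + y) ^ (y - 1) / (b + y) ^ (y - 1) := by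
      rw [show 1 - y = -(y - 1) by ring, rpow_neg (by positivity), div_rpow (by positivity)
        (by positivity), inv_div]
    rw [hpow, div_mul_div_comm, div_le_div_iff₀ hBa (by positivity)]
    linarith
end

section
/- Let 0 < a < b and y > 1. Then (a/b) · (b^b (a+y)^(a+y) / (a^a (b+y)^(b+y)))^(1 - 1/y) ≤ B(b,y)/B(a,y). -/
open Real MeasureTheory intervalIntegral

/-!
Since `B x y = Γ x Γ y / Γ (x + y)`, Euler's limit formula for `Γ` makes `B b y / B a y` the limit
of the partial products `∏_{k<n} (a+k)(b+y+k) / ((b+k)(a+y+k))`. Their logarithm is `S_n b - S_n a`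
with `S_n x = ∑_{k<n} log ((x+y+k)/(x+k))`, and `-S_n' x = ∑_{k<n} (1/(x+k) - 1/(x+y+k))` is at most
`1/x + (1 - 1/y) log ((x+y)/x)`: the terms telescope against this bound because
`1/(u+1) - 1/(u+y) = (1 - 1/y) · y/(A+y) ≤ (1 - 1/y) log ((A+y)/A)` for `A = u (u+1+y)`.
Integrating the bound from `a` to `b` gives exactly the logarithm of the left-hand side.
-/

open Filter Topology Finset

lemma ofReal_B (x y : ℝ) : (B x y : ℂ) = Complex.betaIntegral x y := by
  rw [B, ← integral_ofReal, Complex.betaIntegral]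
  refine integral_congr fun t ht => ?_
  rw [Set.uIcc_of_le zero_le_one] at ht
  push_cast
  rw [Complex.ofReal_cpow ht.1, Complex.ofReal_cpow (sub_nonneg.2 ht.2)]
  push_cast
  ring

lemma B_eq_beta {x y : ℝ} (hx : 0 < x) (hy : 0 < y) : B x y = ProbabilityTheory.beta x y := by
  rw [ProbabilityTheory.beta_eq_betaIntegralReal x y hx hy, ← ofReal_B, Complex.ofReal_re]

lemma GammaSeq_mul_div_eq_prod {s₁ s₂ t₁ t₂ : ℝ} (hs₁ : 0 < s₁) (hs₂ : 0 < s₂) (ht₁ : 0 < t₁)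
    (ht₂ : 0 < t₂) (h : s₁ + s₂ = t₁ + t₂) {n : ℕ} (hn : n ≠ 0) :
    GammaSeq s₁ n * GammaSeq s₂ n / (GammaSeq t₁ n * GammaSeq t₂ n) =
      ∏ k ∈ range (n + 1), (t₁ + k) * (t₂ + k) / ((s₁ + k) * (s₂ + k)) := by
  have hn' : (0 : ℝ) < n := by positivity
  have hpow : (n : ℝ) ^ s₁ * (n : ℝ) ^ s₂ = (n : ℝ) ^ t₁ * (n : ℝ) ^ t₂ := by
    rw [← rpow_add hn', ← rpow_add hn', h]
  have hprod : ∀ s : ℝ, 0 < s → 0 < ∏ j ∈ range (n + 1), (s + j) :=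
    fun s hs => prod_pos fun j _ => by positivity
  have := hprod s₁ hs₁; have := hprod s₂ hs₂; have := hprod t₁ ht₁; have := hprod t₂ ht₂
  have : (0 : ℝ) < n.factorial := by positivity
  rw [prod_div_distrib, prod_mul_distrib, prod_mul_distrib]
  simp only [GammaSeq]
  field_simp
  exact hpow

lemma tendsto_prod_div_Gamma {s₁ s₂ t₁ t₂ : ℝ} (hs₁ : 0 < s₁) (hs₂ : 0 < s₂) (ht₁ : 0 < t₁)
    (ht₂ : 0 < t₂) (h : s₁ + s₂ = t₁ + t₂) :
    Tendsto (fun n : ℕ => ∏ k ∈ range n, (t₁ + k) * (t₂ + k) / ((s₁ + k) * (s₂ + k))) atTop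
      (𝓝 (Gamma s₁ * Gamma s₂ / (Gamma t₁ * Gamma t₂))) := by
  rw [← tendsto_add_atTop_iff_nat 1]
  have hlim := ((GammaSeq_tendsto_Gamma s₁).mul (GammaSeq_tendsto_Gamma s₂)).div
    ((GammaSeq_tendsto_Gamma t₁).mul (GammaSeq_tendsto_Gamma t₂))
    (mul_pos (Gamma_pos_of_pos ht₁) (Gamma_pos_of_pos ht₂)).ne'
  refine hlim.congr' (eventually_ne_atTop 0 |>.mono fun n hn => ?_)
  exact GammaSeq_mul_div_eq_prod hs₁ hs₂ ht₁ ht₂ h hn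

section DigammaGap

variable {y : ℝ}

/-- A majorant of `ψ (u + y) - ψ u = ∑ₖ (1/(u+k) - 1/(u+y+k))` for `y ≥ 1`. -/
noncomputable def digammaGapBound (y u : ℝ) : ℝ := 1 / u + (1 - 1 / y) * (log (u + y) - log u)

lemma digammaGapBound_nonneg (hy : 1 ≤ y) {u : ℝ} (hu : 0 < u) : 0 ≤ digammaGapBound y u := by
  have hfac : 0 ≤ 1 - 1 / y := sub_nonneg.2 ((div_le_one (by linarith)).2 hy)
  have hlog : log u ≤ log (u + y) := log_le_log hu (by linarith)
  exact add_nonneg (by positivity) (mul_nonneg hfac (sub_nonneg.2 hlog))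

lemma one_div_sub_one_div_le_digammaGapBound_sub (hy : 1 ≤ y) {u : ℝ} (hu : 0 < u) :
    1 / u - 1 / (u + y) ≤ digammaGapBound y u - digammaGapBound y (u + 1) := by
  set A := u * (u + 1 + y)
  have hA : 0 < A := by positivity
  have hAy : (u + 1) * (u + y) = A + y := by ring
  have hlog : y / (A + y) ≤ log (A + y) - log A := by
    have := one_sub_inv_le_log_of_pos (show 0 < (A + y) / A by positivity)
    rw [log_div (by positivity) hA.ne', inv_div] at this
    calc y / (A + y) = 1 - A / (A + y) := by field_simp; ring
      _ ≤ _ := this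
  have hlog' : log (A + y) - log A = log (u + y) - log u - (log (u + 1 + y) - log (u + 1)) := by
    rw [← hAy, log_mul (by positivity) (by positivity), log_mul hu.ne' (by positivity)]
    ring
  have hfac : 0 ≤ 1 - 1 / y := sub_nonneg.2 ((div_le_one (by linarith)).2 hy)
  calc 1 / u - 1 / (u + y) = (1 / u - 1 / (u + 1)) + (1 - 1 / y) * (y / (A + y)) := by
        rw [← hAy]; field_simp; ring
    _ ≤ (1 / u - 1 / (u + 1)) + (1 - 1 / y) * (log (A + y) - log A) := by gcongr
    _ = _ := by rw [hlog', digammaGapBound, digammaGapBound]; ring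

lemma sum_one_div_sub_one_div_le_digammaGapBound (hy : 1 ≤ y) {x : ℝ} (hx : 0 < x) (n : ℕ) :
    ∑ k ∈ range n, (1 / (x + k) - 1 / (x + y + k)) ≤ digammaGapBound y x := by
  calc ∑ k ∈ range n, (1 / (x + k) - 1 / (x + y + k))
      ≤ ∑ k ∈ range n, (digammaGapBound y (x + k) - digammaGapBound y (x + ↑(k + 1))) := by
        refine sum_le_sum fun k _ => ?_
        have := one_div_sub_one_div_le_digammaGapBound_sub hy (u := x + k) (by positivity)
        rwa [add_right_comm, Nat.cast_succ, ← add_assoc]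
    _ = digammaGapBound y x - digammaGapBound y (x + n) := by
        rw [sum_range_sub' (fun k : ℕ => digammaGapBound y (x + k))]; simp
    _ ≤ digammaGapBound y x := sub_le_self _ (digammaGapBound_nonneg hy (by positivity))

lemma hasDerivAt_log_add_sum (hy : 0 < y) {x : ℝ} (hx : 0 < x) (n : ℕ) :
    HasDerivAt (fun x => log x + (1 - 1 / y) * ((x + y) * log (x + y) - x * log x) +
        ∑ k ∈ range n, (log (x + y + k) - log (x + k)))
      (digammaGapBound y x - ∑ k ∈ range n, (1 / (x + k) - 1 / (x + y + k))) x := by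
  have hshift : ∀ c : ℝ, 0 < x + c → HasDerivAt (fun x => log (x + c)) (1 / (x + c)) x :=
    fun c hc => (hasDerivAt_id' x |>.add_const c).log hc.ne'
  have hlog := hasDerivAt_log hx.ne'
  have hxlog := (hasDerivAt_id' x).fun_mul hlog
  have hxylog := ((hasDerivAt_id' x).add_const y).fun_mul (hshift y (by linarith))
  have hsum := HasDerivAt.fun_sum (u := range n) fun k _ =>
    (hshift (y + k) (by positivity)).fun_sub (hshift k (by positivity))
  simp only [← add_assoc] at hsum
  refine ((hlog.fun_add ((hxylog.fun_sub hxlog).const_mul (1 - 1 / y))).fun_add hsum).congr_deriv ?_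
  have hneg : ∑ k ∈ range n, (1 / (x + y + k) - 1 / (x + k)) =
      -∑ k ∈ range n, (1 / (x + k) - 1 / (x + y + k)) := by
    simp only [← sum_neg_distrib, neg_sub]
  rw [hneg, digammaGapBound]
  field_simp
  ring

lemma monotoneOn_log_add_sum (hy : 1 ≤ y) (n : ℕ) :
    MonotoneOn (fun x => log x + (1 - 1 / y) * ((x + y) * log (x + y) - x * log x) +
        ∑ k ∈ range n, (log (x + y + k) - log (x + k))) (Set.Ioi 0) := by
  have hderiv := fun x (hx : x ∈ Set.Ioi (0:ℝ)) => hasDerivAt_log_add_sum (by linarith) hx n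
  refine monotoneOn_of_hasDerivWithinAt_nonneg (convex_Ioi 0)
    (fun x hx => (hderiv x hx).continuousAt.continuousWithinAt)
    (fun x hx => (hderiv x (interior_subset hx)).hasDerivWithinAt) fun x hx => ?_
  exact sub_nonneg.2 (sum_one_div_sub_one_div_le_digammaGapBound hy (interior_subset hx) n)

end DigammaGap

lemma rpow_le_prod_div {a b y : ℝ} (ha : 0 < a) (hab : a ≤ b) (hy : 1 ≤ y) (n : ℕ) :
    (a / b) * (b ^ b * (a + y) ^ (a + y) / (a ^ a * (b + y) ^ (b + y))) ^ (1 - 1 / y) ≤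
      ∏ k ∈ range n, (a + k) * (b + y + k) / ((b + k) * (a + y + k)) := by
  have hb : 0 < b := ha.trans_le hab
  have hy0 : 0 < y := by linarith
  have hmono := monotoneOn_log_add_sum hy n ha hb hab
  simp only at hmono
  have hlog_prod : log (∏ k ∈ range n, (a + k) * (b + y + k) / ((b + k) * (a + y + k))) =
      ∑ k ∈ range n, (log (b + y + k) - log (b + k)) -
        ∑ k ∈ range n, (log (a + y + k) - log (a + k)) := by
    rw [log_prod fun k _ => by positivity, ← sum_sub_distrib]
    refine sum_congr rfl fun k _ => ?_
    rw [log_div (by positivity) (by positivity), log_mul (by positivity) (by positivity),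
      log_mul (by positivity) (by positivity)]
    ring
  rw [← log_le_log_iff (by positivity) (prod_pos fun k _ => by positivity), hlog_prod,
    log_mul (by positivity) (by positivity), log_div ha.ne' hb.ne', log_rpow (by positivity),
    log_div (by positivity) (by positivity), log_mul (by positivity) (by positivity),
    log_mul (by positivity) (by positivity), log_rpow hb, log_rpow (by positivity), log_rpow ha,
    log_rpow (by positivity)]
  linarith

theorem stmt7 (a b y : ℝ) (ha : 0 < a) (hab : a < b) (hy : 1 < y) :
    (a / b) * (b ^ b * (a + y) ^ (a + y) / (a ^ a * (b + y) ^ (b + y))) ^ (1 - 1 / y) ≤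
      B b y / B a y := by
  have hb : 0 < b := ha.trans hab
  have hy0 : 0 < y := by linarith
  have hlim := tendsto_prod_div_Gamma hb (add_pos ha hy0) ha (add_pos hb hy0) (by ring)
  have hratio : B b y / B a y = Gamma b * Gamma (a + y) / (Gamma a * Gamma (b + y)) := by
    have := Gamma_pos_of_pos hy0
    have := Gamma_pos_of_pos (add_pos ha hy0)
    have := Gamma_pos_of_pos (add_pos hb hy0)
    rw [B_eq_beta hb hy0, B_eq_beta ha hy0, ProbabilityTheory.beta, ProbabilityTheory.beta]
    field_simp
  rw [hratio]
  exact ge_of_tendsto' hlim (rpow_le_prod_div ha hab.le hy.le)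
end
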